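/- For all complex numbers s, t, u with Re s > 1, Re t > 1 and Re u > 1, one has T(s,t,u) = ∫_0^1 F(s,a) F(t,a) F(u,1−a) da, where for each a ∈ (0,1) the three series defining F converge. -/

import Mathlib

open Real Complex

/-- The Tornheim double zeta function, as a double series over positive integers. -/
noncomputable def tornheim (s t u : ℂ) : ℂ :=
  ∑' p : ℕ+ × ℕ+, 1 / ((p.1 : ℂ) ^ s * (p.2 : ℂ) ^ t * ((p.1 : ℂ) + (p.2 : ℂ)) ^ u)

/-- The symmetric Tornheim double zeta function `S₁`. -/
noncomputable def S₁ (s t u : ℂ) : ℂ :=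
  (1 + exp (-π * I * (s + t + u))) * tornheim s t u
    + (exp (-π * I * s) + exp (-π * I * (t + u))) * tornheim u s t
    + (exp (-π * I * t) + exp (-π * I * (u + s))) * tornheim t u s

/-- The symmetric Tornheim double zeta function `S₂`. -/
noncomputable def S₂ (s t u : ℂ) : ℂ :=
  (exp (-π * I * u) + exp (-π * I * (s + t))) * tornheim s t u
    + (exp (-π * I * t) + exp (-π * I * (u + s))) * tornheim u s t
    + (exp (-π * I * s) + exp (-π * I * (t + u))) * tornheim t u s

/-- The symmetric Tornheim double zeta function `S₃`. -/
noncomputable def S₃ (s t u : ℂ) : ℂ :=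
  tornheim s t u + tornheim u s t + tornheim t u s

/-- The symmetric Tornheim double zeta function `S₄`. -/
noncomputable def S₄ (s t u : ℂ) : ℂ :=
  -tornheim s t u + tornheim u s t + tornheim t u s


/-- The periodic zeta function `F(s,a) = Σ_{n≥1} e^{2πina}/n^s`. -/
noncomputable def periodicZeta (s : ℂ) (a : ℝ) : ℂ :=
  ∑' n : ℕ+, Complex.exp (2 * π * I * n * a) / (n : ℂ) ^ s

/-!
Expanding the three periodic zeta functions, the integrand becomes the triple series over
`(m, n, k)` of `e^{2πi(m+n-k)a} / (m^s n^t k^u)`. Its terms are bounded, uniformly in `a`, by the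
summable family `m^{-Re s} n^{-Re t} k^{-Re u}`, so by dominated convergence the series may be
integrated termwise. By orthogonality of the characters `e^{2πida}` on `[0,1]` only the terms
with `k = m + n` survive, and these sum to `T(s,t,u)`.
-/

open MeasureTheory

theorem intervalIntegral.hasSum_integral_of_norm_le_summable {ι E : Type*} [Countable ι]
    [NormedAddCommGroup E] [NormedSpace ℝ E] {F : ι → ℝ → E} {f : ℝ → E} {C : ι → ℝ} {a b : ℝ}
    (hF : ∀ i, Continuous (F i)) (hFC : ∀ i x, ‖F i x‖ ≤ C i) (hC : Summable C)
    (hf : ∀ x, HasSum (fun i ↦ F i x) (f x)) :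
    HasSum (fun i ↦ ∫ x in a..b, F i x) (∫ x in a..b, f x) :=
  intervalIntegral.hasSum_integral_of_dominated_convergence (fun i _ ↦ C i)
    (fun i ↦ (hF i).aestronglyMeasurable) (fun i ↦ ae_of_all _ fun x _ ↦ hFC i x)
    (ae_of_all _ fun _ _ ↦ hC) intervalIntegrable_const (ae_of_all _ fun x _ ↦ hf x)

theorem integral_exp_two_pi_I_int_mul (d : ℤ) :
    ∫ a in (0 : ℝ)..1, exp (2 * π * I * d * a) = if d = 0 then 1 else 0 := by
  split_ifs with hd
  · simp [hd]
  · have hc : 2 * π * I * d ≠ 0 := by simp [Real.pi_ne_zero, I_ne_zero, hd]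
    have hperiod : exp (2 * π * I * d) = 1 := by
      rw [show 2 * π * I * d = d * (2 * π * I) by ring, exp_int_mul_two_pi_mul_I]
    rw [integral_exp_mul_complex hc]
    simp [hperiod]

theorem summable_pnat_rpow_neg {σ : ℝ} (hσ : 1 < σ) :
    Summable fun n : ℕ+ ↦ ((n : ℕ) : ℝ) ^ (-σ) :=
  (Real.summable_nat_rpow.mpr (by linarith)).comp_injective PNat.coe_injective

noncomputable def periodicZetaTerm (s : ℂ) (a : ℝ) (n : ℕ+) : ℂ :=
  exp (2 * π * I * n * a) / (n : ℂ) ^ s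

theorem norm_periodicZetaTerm (s : ℂ) (a : ℝ) (n : ℕ+) :
    ‖periodicZetaTerm s a n‖ = ((n : ℕ) : ℝ) ^ (-s.re) := by
  have hn : (n : ℂ) = ((n : ℕ) : ℝ) := by norm_cast
  rw [periodicZetaTerm, norm_div, norm_exp, hn, norm_cpow_eq_rpow_re_of_pos (by positivity),
    Real.rpow_neg (by positivity)]
  simp

theorem summable_norm_periodicZetaTerm {s : ℂ} (hs : 1 < s.re) (a : ℝ) :
    Summable fun n ↦ ‖periodicZetaTerm s a n‖ := by
  simpa only [norm_periodicZetaTerm] using summable_pnat_rpow_neg hs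

theorem hasSum_periodicZetaTerm_mul_mul {s t u : ℂ} (hs : 1 < s.re) (ht : 1 < t.re)
    (hu : 1 < u.re) (a : ℝ) :
    HasSum (fun q : (ℕ+ × ℕ+) × ℕ+ ↦
        periodicZetaTerm s a q.1.1 * periodicZetaTerm t a q.1.2 * periodicZetaTerm u (1 - a) q.2)
      (periodicZeta s a * periodicZeta t a * periodicZeta u (1 - a)) := by
  have h₁ := summable_norm_periodicZetaTerm hs a
  have h₂ := summable_norm_periodicZetaTerm ht a
  have h₃ := summable_norm_periodicZetaTerm hu (1 - a)
  have h₁₂ := h₁.mul_norm h₂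
  have hprod : periodicZeta s a * periodicZeta t a * periodicZeta u (1 - a) =
      ∑' q : (ℕ+ × ℕ+) × ℕ+,
        periodicZetaTerm s a q.1.1 * periodicZetaTerm t a q.1.2 *
          periodicZetaTerm u (1 - a) q.2 := by
    rw [← tsum_mul_tsum_of_summable_norm h₁₂ h₃, ← tsum_mul_tsum_of_summable_norm h₁ h₂]
    rfl
  exact hprod ▸ (summable_mul_of_summable_norm h₁₂ h₃).hasSum

theorem integral_periodicZetaTerm_mul_mul (s t u : ℂ) (m n k : ℕ+) :
    ∫ a in (0 : ℝ)..1,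
        periodicZetaTerm s a m * periodicZetaTerm t a n * periodicZetaTerm u (1 - a) k =
      if m + n = k then 1 / ((m : ℂ) ^ s * (n : ℂ) ^ t * (k : ℂ) ^ u) else 0 := by
  set d : ℤ := m + n - k
  have hexp : exp (2 * π * I * k) = 1 := by
    rw [show 2 * π * I * k = (k : ℕ) * (2 * π * I) by ring]
    exact exp_nat_mul_two_pi_mul_I _
  have hterm : ∀ a : ℝ,
      periodicZetaTerm s a m * periodicZetaTerm t a n * periodicZetaTerm u (1 - a) k =
        1 / ((m : ℂ) ^ s * (n : ℂ) ^ t * (k : ℂ) ^ u) * exp (2 * π * I * d * a) := by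
    intro a
    have hchar : exp (2 * π * I * d * a) = exp (2 * π * I * m * a) * exp (2 * π * I * n * a) *
        exp (2 * π * I * k * ((1 - a : ℝ) : ℂ)) := by
      rw [← mul_one (exp (2 * π * I * d * a)), ← hexp, ← Complex.exp_add, ← Complex.exp_add,
        ← Complex.exp_add]
      congr 1
      simp only [d]; push_cast; ring
    rw [hchar]
    simp only [periodicZetaTerm]
    ring
  have hd : d = 0 ↔ m + n = k := by
    rw [sub_eq_zero, ← PNat.coe_inj]; push_cast; omega
  simp_rw [hterm, intervalIntegral.integral_const_mul, integral_exp_two_pi_I_int_mul, hd]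
  split_ifs <;> simp

theorem tornheim_eq_tsum_ite (s t u : ℂ) :
    tornheim s t u = ∑' q : (ℕ+ × ℕ+) × ℕ+,
      if q.1.1 + q.1.2 = q.2 then 1 / ((q.1.1 : ℂ) ^ s * (q.1.2 : ℂ) ^ t * (q.2 : ℂ) ^ u)
      else 0 := by
  have hinj : Function.Injective fun p : ℕ+ × ℕ+ ↦ (p, p.1 + p.2) :=
    fun p q h ↦ (Prod.ext_iff.1 h).1
  rw [tornheim, ← hinj.tsum_eq]
  · simp
  · rintro ⟨p, k⟩ hq
    by_cases h : p.1 + p.2 = k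
    · exact ⟨p, by simp [h]⟩
    · simp [h] at hq

theorem tornheim_integral_repr (s t u : ℂ) (hs : 1 < s.re) (ht : 1 < t.re) (hu : 1 < u.re) :
    (∀ a : ℝ, a ∈ Set.Ioo (0 : ℝ) 1 →
      Summable (fun n : ℕ+ => Complex.exp (2 * π * I * n * a) / (n : ℂ) ^ s) ∧
      Summable (fun n : ℕ+ => Complex.exp (2 * π * I * n * a) / (n : ℂ) ^ t) ∧
      Summable (fun n : ℕ+ => Complex.exp (2 * π * I * n * (1 - a : ℝ)) / (n : ℂ) ^ u)) ∧
    tornheim s t u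
      = ∫ a in (0 : ℝ)..1, periodicZeta s a * periodicZeta t a * periodicZeta u (1 - a) := by
  refine ⟨fun a _ ↦ ⟨(summable_norm_periodicZetaTerm hs a).of_norm,
    (summable_norm_periodicZetaTerm ht a).of_norm,
    (summable_norm_periodicZetaTerm hu (1 - a)).of_norm⟩, ?_⟩
  have hbound : Summable fun q : (ℕ+ × ℕ+) × ℕ+ ↦
      ((q.1.1 : ℕ) : ℝ) ^ (-s.re) * ((q.1.2 : ℕ) : ℝ) ^ (-t.re) * ((q.2 : ℕ) : ℝ) ^ (-u.re) :=
    ((summable_pnat_rpow_neg hs).mul_of_nonneg (summable_pnat_rpow_neg ht)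
      (fun _ ↦ by positivity) (fun _ ↦ by positivity)).mul_of_nonneg
      (summable_pnat_rpow_neg hu) (fun _ ↦ by positivity) (fun _ ↦ by positivity)
  have htermwise := intervalIntegral.hasSum_integral_of_norm_le_summable (a := 0) (b := 1)
    (fun q ↦ by simp only [periodicZetaTerm]; fun_prop)
    (fun q a ↦ by simp only [norm_mul, norm_periodicZetaTerm, le_refl]) hbound
    (hasSum_periodicZetaTerm_mul_mul hs ht hu)
  rw [tornheim_eq_tsum_ite, ← htermwise.tsum_eq]
  exact tsum_congr fun q ↦ (integral_periodicZetaTerm_mul_mul s t u _ _ _).symm
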